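/- Let E be a p-convex Banach function lattice on a σ-finite measure space with M^(p)(E) = 1, let 1 ≤ p ≤ q < ∞ and 1/r = 1/p − 1/q. Then for every finite sequence x_1, …, x_n in E, sup_{(β_k) ∈ B_r^n} ‖( ∑_{k=1}^n |β_k x_k|^p )^{1/p}‖_E = sup_{x* ∈ B⁺_{(E_p)*}} ( ∑_{k=1}^n ⟨|x_k|^p, x*⟩^{q/p} )^{1/q}, where B⁺_{(E_p)*} is the positive part of the closed unit ball of the dual of the p-concavification E_p. -/

import Mathlib

open MeasureTheory Filter

noncomputable section

section Preamble

variable {Ω : Type} [MeasurableSpace Ω] {μ : Measure Ω}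

/-- The a.e.-class of `ω ↦ |f ω| ^ e` (real power). -/
def rpowAbs (e : ℝ) (f : Ω →ₘ[μ] ℝ) : Ω →ₘ[μ] ℝ :=
  AEEqFun.mk (fun ω => |f ω| ^ e)
    (((measurable_abs.comp_aemeasurable f.aestronglyMeasurable.aemeasurable).pow
        aemeasurable_const).aestronglyMeasurable)

/-- The a.e.-class of `ω ↦ (∑ k, |x k ω| ^ p) ^ (1/p)`. -/
def pSum (p : ℝ) {n : ℕ} (x : Fin n → (Ω →ₘ[μ] ℝ)) : Ω →ₘ[μ] ℝ :=
  AEEqFun.mk (fun ω => (∑ k, |x k ω| ^ p) ^ p⁻¹)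
    (((Finset.aemeasurable_fun_sum Finset.univ fun k _ =>
        ((measurable_abs.comp_aemeasurable (x k).aestronglyMeasurable.aemeasurable).pow
          aemeasurable_const)).pow
      aemeasurable_const).aestronglyMeasurable)

/-- A Banach function lattice on a measure space `(Ω, μ)`: an order ideal of `L⁰(μ)`
equipped with a complete lattice norm. -/
structure BFL (Ω : Type) [MeasurableSpace Ω] (μ : Measure Ω) where
  mem : (Ω →ₘ[μ] ℝ) → Prop
  nrm : (Ω →ₘ[μ] ℝ) → ℝ
  zero_mem : mem 0
  add_mem : ∀ f g, mem f → mem g → mem (f + g)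
  smul_mem : ∀ (c : ℝ) f, mem f → mem (c • f)
  ideal : ∀ f g, mem g → |f| ≤ |g| → mem f
  nrm_nonneg : ∀ f, 0 ≤ nrm f
  nrm_eq_zero : ∀ f, mem f → nrm f = 0 → f = 0
  nrm_triangle : ∀ f g, mem f → mem g → nrm (f + g) ≤ nrm f + nrm g
  nrm_smul : ∀ (c : ℝ) f, mem f → nrm (c • f) = |c| * nrm f
  nrm_mono : ∀ f g, mem g → |f| ≤ |g| → nrm f ≤ nrm g
  complete : ∀ u : ℕ → (Ω →ₘ[μ] ℝ), (∀ n, mem (u n)) →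
    (∀ ε : ℝ, 0 < ε → ∃ N, ∀ m ≥ N, ∀ k ≥ N, nrm (u m - u k) < ε) →
    ∃ f, mem f ∧ Tendsto (fun n => nrm (u n - f)) atTop (nhds 0)

/-- `p`-convexity with constant `C`. -/
def BFL.pConvex (X : BFL Ω μ) (p C : ℝ) : Prop :=
  ∀ (n : ℕ) (x : Fin n → (Ω →ₘ[μ] ℝ)), (∀ k, X.mem (x k)) →
    X.mem (pSum p x) ∧ X.nrm (pSum p x) ≤ C * (∑ k, X.nrm (x k) ^ p) ^ p⁻¹

/-- `p`-concavity with constant `C`. -/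
def BFL.pConcave (X : BFL Ω μ) (p C : ℝ) : Prop :=
  ∀ (n : ℕ) (x : Fin n → (Ω →ₘ[μ] ℝ)), (∀ k, X.mem (x k)) →
    (∑ k, X.nrm (x k) ^ p) ^ p⁻¹ ≤ C * X.nrm (pSum p x)

/-- Order continuity of a function norm: decreasing sequences with infimum `0`
have norms tending to `0`. -/
def OrderContOn (mem : (Ω →ₘ[μ] ℝ) → Prop) (nrm : (Ω →ₘ[μ] ℝ) → ℝ) : Prop :=
  ∀ f : ℕ → (Ω →ₘ[μ] ℝ), (∀ n, mem (f n)) → (∀ n, f (n + 1) ≤ f n) → (∀ n, 0 ≤ f n) →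
    (∀ g, (∀ n, g ≤ f n) → g ≤ 0) → Tendsto (fun n => nrm (f n)) atTop (nhds 0)

/-- Order continuity of a Banach function lattice. -/
def BFL.OrderCont (X : BFL Ω μ) : Prop := OrderContOn X.mem X.nrm

/-- The Fatou property. -/
def BFL.Fatou (X : BFL Ω μ) : Prop :=
  ∀ (f : ℕ → (Ω →ₘ[μ] ℝ)) (g : Ω →ₘ[μ] ℝ), (∀ n, X.mem (f n)) → (∀ n, 0 ≤ f n) →
    Monotone f → (∀ n, f n ≤ g) → (∀ h, (∀ n, f n ≤ h) → g ≤ h) →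
    BddAbove (Set.range fun n => X.nrm (f n)) →
    X.mem g ∧ Tendsto (fun n => X.nrm (f n)) atTop (nhds (X.nrm g))

/-- The closed unit ball `B_r^n` of `ℓ_r^n` where `1/r = 1/p - 1/q` (`r = ∞` when `p = q`). -/
def strongBall (p q : ℝ) (n : ℕ) : Set (Fin n → ℝ) :=
  {β | if p = q then ∀ k, |β k| ≤ 1 else ∑ k, |β k| ^ (1 / p - 1 / q)⁻¹ ≤ 1}

/-- `sup_{β ∈ B_r^n} ‖(∑_k |β_k x_k|^p)^{1/p}‖`, where `1/r = 1/p - 1/q`. -/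
def strongSup (nrm : (Ω →ₘ[μ] ℝ) → ℝ) (p q : ℝ) {n : ℕ} (x : Fin n → (Ω →ₘ[μ] ℝ)) : ℝ :=
  ⨆ β : strongBall p q n, nrm (pSum p fun k => β.1 k • x k)

/-- Membership in the `p`-concavification: `f ∈ X_p ↔ |f|^{1/p} ∈ X`. -/
def cMem (mem : (Ω →ₘ[μ] ℝ) → Prop) (p : ℝ) (f : Ω →ₘ[μ] ℝ) : Prop := mem (rpowAbs p⁻¹ f)

/-- The norm of the `p`-concavification: `‖f‖_{X_p} = ‖|f|^{1/p}‖_X ^ p`. -/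
def cNrm (nrm : (Ω →ₘ[μ] ℝ) → ℝ) (p : ℝ) (f : Ω →ₘ[μ] ℝ) : ℝ := nrm (rpowAbs p⁻¹ f) ^ p

/-- The positive part of the closed dual unit ball of a function norm: positive functionals
of norm at most one, as bare functions on `L⁰`. -/
def dualBallPos (mem : (Ω →ₘ[μ] ℝ) → Prop) (nrm : (Ω →ₘ[μ] ℝ) → ℝ) :
    Set ((Ω →ₘ[μ] ℝ) → ℝ) :=
  {φ | (∀ f g, mem f → mem g → φ (f + g) = φ f + φ g) ∧
       (∀ (c : ℝ) f, mem f → φ (c • f) = c * φ f) ∧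
       (∀ f, mem f → 0 ≤ f → 0 ≤ φ f) ∧
       (∀ f, mem f → |φ f| ≤ nrm f)}

/-- The closed dual unit ball of a function norm. -/
def dualBall (mem : (Ω →ₘ[μ] ℝ) → Prop) (nrm : (Ω →ₘ[μ] ℝ) → ℝ) :
    Set ((Ω →ₘ[μ] ℝ) → ℝ) :=
  {φ | (∀ f g, mem f → mem g → φ (f + g) = φ f + φ g) ∧
       (∀ (c : ℝ) f, mem f → φ (c • f) = c * φ f) ∧
       (∀ f, mem f → |φ f| ≤ nrm f)}

/-- The positive part of the dual unit ball, as a type carrying the weak* (pointwise)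
topology and its Borel σ-algebra. -/
def DualPos (mem : (Ω →ₘ[μ] ℝ) → Prop) (nrm : (Ω →ₘ[μ] ℝ) → ℝ) : Type _ :=
  ↥(dualBallPos mem nrm)

instance {mem : (Ω →ₘ[μ] ℝ) → Prop} {nrm : (Ω →ₘ[μ] ℝ) → ℝ} :
    TopologicalSpace (DualPos (μ := μ) mem nrm) :=
  inferInstanceAs (TopologicalSpace ↥(dualBallPos mem nrm))

instance {mem : (Ω →ₘ[μ] ℝ) → Prop} {nrm : (Ω →ₘ[μ] ℝ) → ℝ} :
    MeasurableSpace (DualPos (μ := μ) mem nrm) := borel _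

instance {mem : (Ω →ₘ[μ] ℝ) → Prop} {nrm : (Ω →ₘ[μ] ℝ) → ℝ} :
    BorelSpace (DualPos (μ := μ) mem nrm) := ⟨rfl⟩

/-- Evaluation of a functional in the dual ball. -/
def DualPos.app {mem : (Ω →ₘ[μ] ℝ) → Prop} {nrm : (Ω →ₘ[μ] ℝ) → ℝ}
    (φ : DualPos (μ := μ) mem nrm) (f : Ω →ₘ[μ] ℝ) : ℝ :=
  Subtype.val φ f

/-- The seminorm `‖f‖_{p,q,ν} = (∫ ⟨|f|^p, φ⟩^{q/p} dν(φ))^{1/q}`. -/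
def pqNrm {mem : (Ω →ₘ[μ] ℝ) → Prop} {nrm : (Ω →ₘ[μ] ℝ) → ℝ} (p q : ℝ)
    (ν : Measure (DualPos (μ := μ) mem nrm)) (f : Ω →ₘ[μ] ℝ) : ℝ :=
  (∫ φ, (DualPos.app φ (rpowAbs p f)) ^ (q / p) ∂ν) ^ q⁻¹

/-- Membership in the Köthe dual of a function space. -/
def kMem (mem : (Ω →ₘ[μ] ℝ) → Prop) (h : Ω →ₘ[μ] ℝ) : Prop :=
  ∀ f, mem f → ∫⁻ ω, ENNReal.ofReal |f ω * h ω| ∂μ < ⊤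

/-- The Köthe dual norm. -/
def kNrm (mem : (Ω →ₘ[μ] ℝ) → Prop) (nrm : (Ω →ₘ[μ] ℝ) → ℝ) (h : Ω →ₘ[μ] ℝ) : ℝ :=
  ⨆ f : {f : Ω →ₘ[μ] ℝ // mem f ∧ nrm f ≤ 1}, ∫ ω, |f.1 ω * h ω| ∂μ

/-- The positive part of the closed unit ball of the Köthe dual. -/
def kothePosBall (mem : (Ω →ₘ[μ] ℝ) → Prop) (nrm : (Ω →ₘ[μ] ℝ) → ℝ) :
    Set (Ω →ₘ[μ] ℝ) :=
  {h | 0 ≤ h ∧ ∀ f, mem f → ∫⁻ ω, ENNReal.ofReal |f ω * h ω| ∂μ ≤ ENNReal.ofReal (nrm f)}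

/-- The positive part of the Köthe-dual unit ball, as a type carrying the topology
`σ(X', X)` of pointwise convergence of the pairings, and its Borel σ-algebra. -/
def KBallPos (mem : (Ω →ₘ[μ] ℝ) → Prop) (nrm : (Ω →ₘ[μ] ℝ) → ℝ) : Type _ :=
  ↥(kothePosBall (μ := μ) mem nrm)

/-- The underlying function of an element of the Köthe-dual ball. -/
def KBallPos.fn {mem : (Ω →ₘ[μ] ℝ) → Prop} {nrm : (Ω →ₘ[μ] ℝ) → ℝ}
    (h : KBallPos (μ := μ) mem nrm) : Ω →ₘ[μ] ℝ :=
  Subtype.val h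

instance {mem : (Ω →ₘ[μ] ℝ) → Prop} {nrm : (Ω →ₘ[μ] ℝ) → ℝ} :
    TopologicalSpace (KBallPos (μ := μ) mem nrm) :=
  TopologicalSpace.induced
    (fun h => fun f : (Ω →ₘ[μ] ℝ) => ∫ ω, f ω * (KBallPos.fn h) ω ∂μ) Pi.topologicalSpace

instance {mem : (Ω →ₘ[μ] ℝ) → Prop} {nrm : (Ω →ₘ[μ] ℝ) → ℝ} :
    MeasurableSpace (KBallPos (μ := μ) mem nrm) := borel _

/-- Membership in the space `S^q_{X_p}(ξ)`. -/
def sMem {mem : (Ω →ₘ[μ] ℝ) → Prop} {nrm : (Ω →ₘ[μ] ℝ) → ℝ} (p q : ℝ)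
    (ξ : Measure (KBallPos (μ := μ) mem nrm)) (f : Ω →ₘ[μ] ℝ) : Prop :=
  (∫⁻ h, (∫⁻ ω, ENNReal.ofReal (|f ω| ^ p * (KBallPos.fn h) ω) ∂μ) ^ (q / p) ∂ξ) < ⊤

/-- The norm of the space `S^q_{X_p}(ξ)`:
`‖f‖ = (∫ (∫ |f|^p h dμ)^{q/p} dξ(h))^{1/q}`. -/
def sNrm {mem : (Ω →ₘ[μ] ℝ) → Prop} {nrm : (Ω →ₘ[μ] ℝ) → ℝ} (p q : ℝ)
    (ξ : Measure (KBallPos (μ := μ) mem nrm)) (f : Ω →ₘ[μ] ℝ) : ℝ :=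
  ((∫⁻ h, (∫⁻ ω, ENNReal.ofReal (|f ω| ^ p * (KBallPos.fn h) ω) ∂μ) ^ (q / p) ∂ξ) ^ q⁻¹).toReal

end Preamble

section Operators

/-- A bounded linear operator between Banach function lattices, as a map of `L⁰` spaces. -/
def IsBddOp {Ω₁ Ω₂ : Type} [MeasurableSpace Ω₁] [MeasurableSpace Ω₂]
    {μ₁ : Measure Ω₁} {μ₂ : Measure Ω₂} (X : BFL Ω₁ μ₁) (Y : BFL Ω₂ μ₂)
    (T : (Ω₁ →ₘ[μ₁] ℝ) → (Ω₂ →ₘ[μ₂] ℝ)) : Prop :=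
  (∀ f, X.mem f → Y.mem (T f)) ∧
  (∀ f g, X.mem f → X.mem g → T (f + g) = T f + T g) ∧
  (∀ (c : ℝ) f, X.mem f → T (c • f) = c • T f) ∧
  ∃ K, ∀ f, X.mem f → Y.nrm (T f) ≤ K * X.nrm f

/-- A bounded linear operator from a Banach function lattice into a normed space. -/
def IsBddOpE {Ω : Type} [MeasurableSpace Ω] {μ : Measure Ω} (X : BFL Ω μ) {E : Type}
    [NormedAddCommGroup E] [NormedSpace ℝ E] (T : (Ω →ₘ[μ] ℝ) → E) : Prop :=
  (∀ f g, X.mem f → X.mem g → T (f + g) = T f + T g) ∧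
  (∀ (c : ℝ) f, X.mem f → T (c • f) = c • T f) ∧
  ∃ K, ∀ f, X.mem f → ‖T f‖ ≤ K * X.nrm f

/-- `T : X → Y` is `(p₁,p₂)`-strongly `(q₁,q₂)`-concave with constant `C`:
`|∑ₖ ⟨T xₖ, yₖ'⟩| ≤ C · sup_{α ∈ B_{r₁}} ‖(∑ |αₖ xₖ|^{p₁})^{1/p₁}‖_X ·
sup_{β ∈ B_{r₂}} ‖(∑ |βₖ yₖ'|^{p₂})^{1/p₂}‖_{Y'}` for all finite sequences in `X` and `Y'`. -/
def StrongPair {Ω₁ Ω₂ : Type} [MeasurableSpace Ω₁] [MeasurableSpace Ω₂]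
    {μ₁ : Measure Ω₁} {μ₂ : Measure Ω₂} (X : BFL Ω₁ μ₁) (Y : BFL Ω₂ μ₂)
    (p₁ q₁ p₂ q₂ : ℝ) (T : (Ω₁ →ₘ[μ₁] ℝ) → (Ω₂ →ₘ[μ₂] ℝ)) (C : ℝ) : Prop :=
  ∀ (n : ℕ) (x : Fin n → (Ω₁ →ₘ[μ₁] ℝ)) (y : Fin n → (Ω₂ →ₘ[μ₂] ℝ)),
    (∀ k, X.mem (x k)) → (∀ k, kMem Y.mem (y k)) →
    |∑ k, ∫ ω, (T (x k)) ω * (y k) ω ∂μ₂| ≤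
      C * (strongSup X.nrm p₁ q₁ x * strongSup (kNrm Y.mem Y.nrm) p₂ q₂ y)

/-- A bounded `m`-linear operator on a product of Banach function lattices. -/
def MultilinearBdd {m : ℕ} {Ω : Fin m → Type} [∀ j, MeasurableSpace (Ω j)]
    {μ : ∀ j, Measure (Ω j)} (X : ∀ j, BFL (Ω j) (μ j))
    {Y : Type} [NormedAddCommGroup Y] [NormedSpace ℝ Y]
    (T : (∀ j, (Ω j →ₘ[μ j] ℝ)) → Y) : Prop :=
  (∀ x, (∀ j, (X j).mem (x j)) → ∀ j f g, (X j).mem f → (X j).mem g →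
      T (Function.update x j (f + g)) = T (Function.update x j f) + T (Function.update x j g)) ∧
  (∀ x, (∀ j, (X j).mem (x j)) → ∀ j (c : ℝ) f, (X j).mem f →
      T (Function.update x j (c • f)) = c • T (Function.update x j f)) ∧
  ∃ K, ∀ x, (∀ j, (X j).mem (x j)) → ‖T x‖ ≤ K * ∏ j, (X j).nrm (x j)

/-- An `m`-linear operator is `(p₁,…,p_m)`-strongly `(q₁,…,q_m)`-concave with constant `C`,
where `1/q = ∑ⱼ 1/qⱼ`:
`(∑ₖ ‖T(x¹ₖ,…,xᵐₖ)‖^q)^{1/q} ≤ C ∏ⱼ sup_{βʲ ∈ B_{rⱼ}} ‖(∑ₖ |βʲₖ xʲₖ|^{pⱼ})^{1/pⱼ}‖_{Xⱼ}`. -/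
def StronglyConcaveML {m : ℕ} {Ω : Fin m → Type} [∀ j, MeasurableSpace (Ω j)]
    {μ : ∀ j, Measure (Ω j)} (X : ∀ j, BFL (Ω j) (μ j)) (p q : Fin m → ℝ)
    {Y : Type} [NormedAddCommGroup Y]
    (T : (∀ j, (Ω j →ₘ[μ j] ℝ)) → Y) (C : ℝ) : Prop :=
  ∀ (n : ℕ) (x : ∀ j, Fin n → (Ω j →ₘ[μ j] ℝ)), (∀ j k, (X j).mem (x j k)) →
    (∑ k, ‖T fun j => x j k‖ ^ (∑ j, (q j)⁻¹)⁻¹) ^ (∑ j, (q j)⁻¹) ≤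
      C * ∏ j, strongSup (X j).nrm (p j) (q j) (x j)

/-- A Banach space, packaged as a structure. -/
structure BanachSpaceStruct where
  E : Type
  grp : NormedAddCommGroup E
  mod : NormedSpace ℝ E
  cpl : CompleteSpace E

attribute [instance] BanachSpaceStruct.grp BanachSpaceStruct.mod BanachSpaceStruct.cpl

end Operators

/-!
With `F_k = |x_k|^p`, the function `G_β = ∑_k |β_k|^p F_k` is `|(∑_k |β_k x_k|^p)^{1/p}|^p`, so
`‖(∑_k |β_k x_k|^p)^{1/p}‖_E^p = ‖G_β‖_{E_p}`; the assumption `M^(p)(E) = 1` is what makes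
`‖·‖_{E_p}` satisfy the triangle inequality. A positive `x*` in the dual ball of `E_p` gives
`∑_k |β_k|^p ⟨F_k, x*⟩ = ⟨G_β, x*⟩ ≤ ‖G_β‖_{E_p}`, and Hahn–Banach, applied with the sublinear
functional `f ↦ ‖f⁺‖_{E_p}`, provides a positive `x*` attaining equality. So both sides are
suprema over `β` and `x*` of `(∑_k |β_k|^p a_k)^{1/p}` with `a_k = ⟨F_k, x*⟩ ≥ 0`: on the left
because of the norming functional, on the right because, as `β` ranges over `B_r^n`, the vector
`(|β_k|^p)_k` ranges over the positive part of the unit ball of `ℓ_{(q/p)'}` (`r = p (q/p)'`), so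
by Hölder duality the supremum over `β` is `‖a‖_{ℓ_{q/p}}`.
-/

theorem ciSup_eq_ciSup_of_forall_exists_le {α ι κ : Type*} [ConditionallyCompleteLattice α]
    {f : ι → α} {g : κ → α} (hg : BddAbove (Set.range g)) (hfg : ∀ i, ∃ j, f i ≤ g j)
    (hgf : ∀ j, ∃ i, g j ≤ f i) : ⨆ i, f i = ⨆ j, g j := by
  rcases isEmpty_or_nonempty ι with hι | hι
  · have : IsEmpty κ := ⟨fun j => hι.elim (hgf j).choose⟩
    rw [iSup_of_empty', iSup_of_empty']
  · have : Nonempty κ := ⟨(hfg (Classical.arbitrary ι)).choose⟩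
    have hf : BddAbove (Set.range f) := by
      obtain ⟨b, hb⟩ := hg
      refine ⟨b, ?_⟩
      rintro _ ⟨i, rfl⟩
      obtain ⟨j, hj⟩ := hfg i
      exact hj.trans (hb ⟨j, rfl⟩)
    exact le_antisymm (ciSup_mono_of_forall_exists hg hfg) (ciSup_mono_of_forall_exists hf hgf)

open scoped NNReal in
theorem mem_strongBall_iff_of_lt {p q : ℝ} (hp : 0 < p) (hpq : p < q) {n : ℕ} (β : Fin n → ℝ) :
    β ∈ strongBall p q n ↔ ∑ k, (‖β k‖₊ ^ p) ^ (1 - p / q)⁻¹ ≤ 1 := by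
  have hr : (1 / p - 1 / q)⁻¹ = p * (1 - p / q)⁻¹ := by
    have : q - p ≠ 0 := (sub_pos.mpr hpq).ne'
    field_simp
  rw [strongBall, Set.mem_ofPred_eq, if_neg hpq.ne, ← NNReal.coe_le_coe, hr]
  push_cast
  simp only [Real.norm_eq_abs, Real.rpow_mul (abs_nonneg _)]

open scoped NNReal in
theorem isGreatest_sum_rpow_mul_strongBall {p q : ℝ} (hp : 0 < p) (hpq : p ≤ q) {n : ℕ}
    {a : Fin n → ℝ} (ha : ∀ k, 0 ≤ a k) :
    IsGreatest ((fun β : Fin n → ℝ => ∑ k, |β k| ^ p * a k) '' strongBall p q n)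
      ((∑ k, a k ^ (q / p)) ^ (p / q)) := by
  rcases hpq.eq_or_lt with rfl | hpq
  · simp only [div_self hp.ne', Real.rpow_one]
    refine ⟨⟨1, by simp [strongBall], by simp⟩, ?_⟩
    rintro _ ⟨β, hβ, rfl⟩
    simp only [strongBall] at hβ
    exact Finset.sum_le_sum fun k _ =>
      mul_le_of_le_one_left (ha k) (Real.rpow_le_one (abs_nonneg _) (hβ k) hp.le)
  lift a to Fin n → ℝ≥0 using ha
  have hconj : (q / p).HolderConjugate (1 - p / q)⁻¹ := by
    simpa using Real.HolderConjugate.inv_one_sub_inv (div_pos hp (hp.trans hpq))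
      ((div_lt_one (hp.trans hpq)).mpr hpq)
  obtain ⟨⟨γ, hγ, hγa⟩, hmax⟩ := NNReal.isGreatest_Lp Finset.univ a hconj
  have hval (β : Fin n → ℝ) : ∑ k, |β k| ^ p * a k = ↑(∑ k, a k * ‖β k‖₊ ^ p) := by
    push_cast
    simp only [Real.norm_eq_abs, mul_comm]
  have hroot (k : Fin n) : ‖(γ k : ℝ) ^ p⁻¹‖₊ ^ p = γ k := by
    ext
    push_cast
    rw [Real.norm_eq_abs, abs_of_nonneg (by positivity),
      Real.rpow_inv_rpow (γ k).coe_nonneg hp.ne']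
  rw [show (∑ k, (a k : ℝ) ^ (q / p)) ^ (p / q) = ↑((∑ k, a k ^ (q / p)) ^ (1 / (q / p))) by
    push_cast; rw [one_div, inv_div]]
  refine ⟨⟨fun k => (γ k : ℝ) ^ p⁻¹, (mem_strongBall_iff_of_lt hp hpq _).mpr ?_, ?_⟩, ?_⟩
  · simp only [hroot]
    exact hγ
  · simp only [hval, hroot]
    exact congrArg _ hγa
  · rintro _ ⟨β, hβ, rfl⟩
    simp only [hval]
    exact_mod_cast hmax ⟨fun k => ‖β k‖₊ ^ p, (mem_strongBall_iff_of_lt hp hpq β).mp hβ, rfl⟩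

theorem isGreatest_rpow_inv_sum_rpow_mul_strongBall {p q : ℝ} (hp : 0 < p) (hpq : p ≤ q)
    {n : ℕ} {a : Fin n → ℝ} (ha : ∀ k, 0 ≤ a k) :
    IsGreatest ((fun β : Fin n → ℝ => (∑ k, |β k| ^ p * a k) ^ p⁻¹) '' strongBall p q n)
      ((∑ k, a k ^ (q / p)) ^ q⁻¹) := by
  obtain ⟨⟨β, hβ, hβa⟩, hmax⟩ := isGreatest_sum_rpow_mul_strongBall hp hpq ha
  have hA : 0 ≤ ∑ k, a k ^ (q / p) := Finset.sum_nonneg fun k _ => Real.rpow_nonneg (ha k) _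
  have hexp : ((∑ k, a k ^ (q / p)) ^ (p / q)) ^ p⁻¹ = (∑ k, a k ^ (q / p)) ^ q⁻¹ := by
    rw [← Real.rpow_mul hA, div_mul_eq_mul_div, mul_inv_cancel₀ hp.ne', one_div]
  rw [← hexp]
  refine ⟨⟨β, hβ, congrArg (· ^ p⁻¹) hβa⟩, ?_⟩
  rintro _ ⟨β', hβ', rfl⟩
  exact Real.rpow_le_rpow (Finset.sum_nonneg fun k _ => mul_nonneg (by positivity) (ha k))
    (hmax ⟨β', hβ', rfl⟩) (inv_nonneg.mpr hp.le)

namespace MeasureTheory.AEEqFun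

variable {Ω : Type} [MeasurableSpace Ω] {μ : Measure Ω}

theorem coeFn_finset_sum {ι : Type*} (s : Finset ι) (f : ι → Ω →ₘ[μ] ℝ) :
    ⇑(∑ i ∈ s, f i) =ᵐ[μ] fun ω => ∑ i ∈ s, f i ω := by
  classical
  induction s using Finset.induction_on with
  | empty => simp only [Finset.sum_empty]; exact coeFn_zero
  | insert a s ha ih =>
    filter_upwards [coeFn_add (f a) (∑ i ∈ s, f i), ih] with ω h₁ h₂
    rw [Finset.sum_insert ha, Finset.sum_insert ha, h₁, Pi.add_apply, h₂]

theorem abs_le_abs_iff_ae {f g : Ω →ₘ[μ] ℝ} : |f| ≤ |g| ↔ ∀ᵐ ω ∂μ, |f ω| ≤ |g ω| := by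
  rw [← coeFn_le]
  exact eventuallyLE_congr (coeFn_abs f) (coeFn_abs g)

theorem abs_sup_zero_le (f : Ω →ₘ[μ] ℝ) : |f ⊔ 0| ≤ |f| :=
  abs_le_abs_iff_ae.mpr <| by
    filter_upwards [coeFn_sup f 0, coeFn_zero (β := ℝ) (μ := μ)] with ω h h₀
    rw [h, h₀, Pi.zero_apply]
    rcases le_total (f ω) 0 with hf | hf
    · simp [max_eq_right hf]
    · simp [max_eq_left hf]

theorem abs_add_sup_zero_le (f g : Ω →ₘ[μ] ℝ) : |(f + g) ⊔ 0| ≤ |f ⊔ 0 + g ⊔ 0| :=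
  abs_le_abs_iff_ae.mpr <| by
    filter_upwards [coeFn_sup (f + g) 0, coeFn_add f g, coeFn_add (f ⊔ 0) (g ⊔ 0),
      coeFn_sup f 0, coeFn_sup g 0, coeFn_zero (β := ℝ) (μ := μ)] with ω h₁ h₂ h₃ h₄ h₅ h₀
    simp only [h₁, h₂, h₃, h₄, h₅, h₀, Pi.add_apply, Pi.zero_apply]
    rw [abs_of_nonneg (le_max_right _ _), abs_of_nonneg (by positivity)]
    exact max_le (add_le_add (le_max_left _ _) (le_max_left _ _)) (by positivity)

theorem smul_sup_zero {c : ℝ} (hc : 0 ≤ c) (f : Ω →ₘ[μ] ℝ) : (c • f) ⊔ 0 = c • (f ⊔ 0) := by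
  ext1
  filter_upwards [coeFn_sup (c • f) 0, coeFn_smul c f, coeFn_smul c (f ⊔ 0), coeFn_sup f 0,
    coeFn_zero (β := ℝ) (μ := μ)] with ω h₁ h₂ h₃ h₄ h₀
  simp only [h₁, h₂, h₃, h₄, h₀, Pi.smul_apply, Pi.zero_apply, smul_eq_mul,
    mul_max_of_nonneg _ _ hc, mul_zero]

theorem neg_sup_zero_of_nonneg {f : Ω →ₘ[μ] ℝ} (hf : 0 ≤ f) : -f ⊔ 0 = 0 := by
  rw [sup_eq_right, ← coeFn_le]
  filter_upwards [coeFn_neg f, coeFn_zero (β := ℝ) (μ := μ), coeFn_le.mpr hf] with ω h₁ h₀ h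
  simp only [h₁, h₀, Pi.neg_apply, Pi.zero_apply] at h ⊢
  linarith

end MeasureTheory.AEEqFun

section RpowAbs

variable {Ω : Type} [MeasurableSpace Ω] {μ : Measure Ω}

open AEEqFun

theorem coeFn_rpowAbs (e : ℝ) (f : Ω →ₘ[μ] ℝ) :
    ⇑(rpowAbs e f) =ᵐ[μ] fun ω => |f ω| ^ e :=
  coeFn_mk _ _

theorem coeFn_pSum (p : ℝ) {n : ℕ} (x : Fin n → (Ω →ₘ[μ] ℝ)) :
    ⇑(pSum p x) =ᵐ[μ] fun ω => (∑ k, |x k ω| ^ p) ^ p⁻¹ :=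
  coeFn_mk _ _

theorem rpowAbs_nonneg (e : ℝ) (f : Ω →ₘ[μ] ℝ) : 0 ≤ rpowAbs e f := by
  rw [← coeFn_le]
  filter_upwards [coeFn_rpowAbs e f, coeFn_zero (β := ℝ) (μ := μ)] with ω h h₀
  rw [h, h₀]
  exact Real.rpow_nonneg (abs_nonneg _) e

theorem rpowAbs_zero {e : ℝ} (he : e ≠ 0) : rpowAbs e (0 : Ω →ₘ[μ] ℝ) = 0 := by
  ext1
  filter_upwards [coeFn_rpowAbs e (0 : Ω →ₘ[μ] ℝ), coeFn_zero (β := ℝ) (μ := μ)] with ω h h₀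
  rw [h, h₀, Pi.zero_apply, abs_zero, Real.zero_rpow he]

theorem rpowAbs_smul (e c : ℝ) (f : Ω →ₘ[μ] ℝ) :
    rpowAbs e (c • f) = |c| ^ e • rpowAbs e f := by
  ext1
  filter_upwards [coeFn_rpowAbs e (c • f), coeFn_smul c f, coeFn_smul (|c| ^ e) (rpowAbs e f),
    coeFn_rpowAbs e f] with ω h₁ h₂ h₃ h₄
  rw [h₁, h₂, h₃, Pi.smul_apply, Pi.smul_apply, h₄, smul_eq_mul, smul_eq_mul, abs_mul,
    Real.mul_rpow (abs_nonneg c) (abs_nonneg _)]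

theorem abs_rpowAbs_le_abs_rpowAbs {e : ℝ} (he : 0 ≤ e) {f g : Ω →ₘ[μ] ℝ} (h : |f| ≤ |g|) :
    |rpowAbs e f| ≤ |rpowAbs e g| :=
  abs_le_abs_iff_ae.mpr <| by
    filter_upwards [coeFn_rpowAbs e f, coeFn_rpowAbs e g, abs_le_abs_iff_ae.mp h]
      with ω h₁ h₂ h
    simp only [h₁, h₂, abs_nonneg, Real.abs_rpow_of_nonneg, abs_abs]
    exact Real.rpow_le_rpow (abs_nonneg _) h he

theorem abs_rpowAbs_inv_rpowAbs {p : ℝ} (hp : p ≠ 0) (f : Ω →ₘ[μ] ℝ) :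
    |rpowAbs p⁻¹ (rpowAbs p f)| = |f| := by
  refine le_antisymm (abs_le_abs_iff_ae.mpr ?_) (abs_le_abs_iff_ae.mpr ?_) <;>
  filter_upwards [coeFn_rpowAbs p⁻¹ (rpowAbs p f), coeFn_rpowAbs p f] with ω h₁ h₂ <;>
  simp only [h₁, h₂, abs_nonneg, Real.abs_rpow_of_nonneg, abs_abs,
    Real.rpow_rpow_inv (abs_nonneg _) hp, le_refl]

theorem abs_rpowAbs_inv_add_le {p : ℝ} (hp : 0 < p) (f g : Ω →ₘ[μ] ℝ) :
    |rpowAbs p⁻¹ (f + g)| ≤ |pSum p ![rpowAbs p⁻¹ f, rpowAbs p⁻¹ g]| :=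
  abs_le_abs_iff_ae.mpr <| by
    filter_upwards [coeFn_rpowAbs p⁻¹ (f + g), coeFn_add f g,
      coeFn_pSum p ![rpowAbs p⁻¹ f, rpowAbs p⁻¹ g], coeFn_rpowAbs p⁻¹ f, coeFn_rpowAbs p⁻¹ g]
      with ω h₁ h₂ h₃ h₄ h₅
    simp only [h₁, h₂, h₃, Fin.sum_univ_two, Matrix.cons_val_zero, Matrix.cons_val_one, h₄, h₅,
      Pi.add_apply, abs_nonneg, Real.abs_rpow_of_nonneg, abs_abs,
      Real.rpow_inv_rpow (abs_nonneg _) hp.ne']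
    exact (Real.rpow_le_rpow (abs_nonneg _) (abs_add_le _ _) (by positivity)).trans
      (le_abs_self _)

theorem rpowAbs_pSum_smul {p : ℝ} (hp : p ≠ 0) {n : ℕ} (β : Fin n → ℝ)
    (x : Fin n → (Ω →ₘ[μ] ℝ)) :
    rpowAbs p (pSum p fun k => β k • x k) = ∑ k, |β k| ^ p • rpowAbs p (x k) := by
  ext1
  have hsmul : ∀ᵐ ω ∂μ, ∀ k, (β k • x k) ω = β k * x k ω ∧
      (|β k| ^ p • rpowAbs p (x k)) ω = |β k| ^ p * |x k ω| ^ p :=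
    ae_all_iff.mpr fun k => by
      filter_upwards [coeFn_smul (β k) (x k), coeFn_smul (|β k| ^ p) (rpowAbs p (x k)),
        coeFn_rpowAbs p (x k)] with ω h₁ h₂ h₃
      rw [h₁, h₂, Pi.smul_apply, Pi.smul_apply, h₃, smul_eq_mul, smul_eq_mul]
      exact ⟨rfl, rfl⟩
  filter_upwards [coeFn_rpowAbs p (pSum p fun k => β k • x k), coeFn_pSum p fun k => β k • x k,
    coeFn_finset_sum Finset.univ fun k => |β k| ^ p • rpowAbs p (x k), hsmul]
    with ω h₁ h₂ h₃ h₄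
  rw [h₁, h₂, h₃, abs_of_nonneg (by positivity), Real.rpow_inv_rpow (by positivity) hp]
  refine Finset.sum_congr rfl fun k _ => ?_
  rw [(h₄ k).1, (h₄ k).2, abs_mul, Real.mul_rpow (abs_nonneg _) (abs_nonneg _)]

end RpowAbs

namespace BFL

variable {Ω : Type} [MeasurableSpace Ω] {μ : Measure Ω} (E : BFL Ω μ) {p : ℝ}

theorem cNrm_nonneg (f : Ω →ₘ[μ] ℝ) : 0 ≤ cNrm E.nrm p f :=
  Real.rpow_nonneg (E.nrm_nonneg _) p

theorem cMem_zero (hp : p ≠ 0) : cMem E.mem p 0 := by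
  rw [cMem, rpowAbs_zero (inv_ne_zero hp)]
  exact E.zero_mem

theorem cMem_smul (c : ℝ) {f : Ω →ₘ[μ] ℝ} (hf : cMem E.mem p f) : cMem E.mem p (c • f) := by
  rw [cMem, rpowAbs_smul]
  exact E.smul_mem _ _ hf

theorem cNrm_smul (hp : p ≠ 0) (c : ℝ) {f : Ω →ₘ[μ] ℝ} (hf : cMem E.mem p f) :
    cNrm E.nrm p (c • f) = |c| * cNrm E.nrm p f := by
  rw [cNrm, cNrm, rpowAbs_smul, E.nrm_smul _ _ hf, abs_of_nonneg (by positivity),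
    Real.mul_rpow (by positivity) (E.nrm_nonneg _), Real.rpow_inv_rpow (abs_nonneg c) hp]

theorem cMem_of_abs_le (hp : 0 ≤ p) {f g : Ω →ₘ[μ] ℝ} (hg : cMem E.mem p g) (h : |f| ≤ |g|) :
    cMem E.mem p f :=
  E.ideal _ _ hg (abs_rpowAbs_le_abs_rpowAbs (inv_nonneg.mpr hp) h)

theorem cNrm_le_of_abs_le (hp : 0 ≤ p) {f g : Ω →ₘ[μ] ℝ} (hg : cMem E.mem p g) (h : |f| ≤ |g|) :
    cNrm E.nrm p f ≤ cNrm E.nrm p g :=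
  Real.rpow_le_rpow (E.nrm_nonneg _)
    (E.nrm_mono _ _ hg (abs_rpowAbs_le_abs_rpowAbs (inv_nonneg.mpr hp) h)) hp

theorem cMem_add (hp : 0 < p) (hconv : E.pConvex p 1) {f g : Ω →ₘ[μ] ℝ}
    (hf : cMem E.mem p f) (hg : cMem E.mem p g) : cMem E.mem p (f + g) :=
  E.ideal _ _ (hconv 2 ![rpowAbs p⁻¹ f, rpowAbs p⁻¹ g] (Fin.forall_fin_two.mpr ⟨hf, hg⟩)).1
    (abs_rpowAbs_inv_add_le hp f g)

theorem cNrm_add_le (hp : 0 < p) (hconv : E.pConvex p 1) {f g : Ω →ₘ[μ] ℝ}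
    (hf : cMem E.mem p f) (hg : cMem E.mem p g) :
    cNrm E.nrm p (f + g) ≤ cNrm E.nrm p f + cNrm E.nrm p g := by
  obtain ⟨hmem, hnrm⟩ :=
    hconv 2 ![rpowAbs p⁻¹ f, rpowAbs p⁻¹ g] (Fin.forall_fin_two.mpr ⟨hf, hg⟩)
  calc cNrm E.nrm p (f + g)
      ≤ E.nrm (pSum p ![rpowAbs p⁻¹ f, rpowAbs p⁻¹ g]) ^ p :=
        Real.rpow_le_rpow (E.nrm_nonneg _)
          (E.nrm_mono _ _ hmem (abs_rpowAbs_inv_add_le hp f g)) hp.le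
    _ ≤ ((E.nrm (rpowAbs p⁻¹ f) ^ p + E.nrm (rpowAbs p⁻¹ g) ^ p) ^ p⁻¹) ^ p := by
        gcongr
        · exact E.nrm_nonneg _
        · simpa [Fin.sum_univ_two] using hnrm
    _ = cNrm E.nrm p f + cNrm E.nrm p g :=
        Real.rpow_inv_rpow (add_nonneg (cNrm_nonneg ..) (cNrm_nonneg ..)) hp.ne'

theorem cMem_rpowAbs (hp : p ≠ 0) {f : Ω →ₘ[μ] ℝ} (hf : E.mem f) : cMem E.mem p (rpowAbs p f) :=
  E.ideal _ _ hf (abs_rpowAbs_inv_rpowAbs hp f).le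

theorem cNrm_rpowAbs (hp : p ≠ 0) {f : Ω →ₘ[μ] ℝ} (hf : E.mem f) :
    cNrm E.nrm p (rpowAbs p f) = E.nrm f ^ p := by
  have hmem := E.cMem_rpowAbs hp hf
  rw [cNrm, le_antisymm (E.nrm_mono _ _ hf (abs_rpowAbs_inv_rpowAbs hp f).le)
    (E.nrm_mono _ _ hmem (abs_rpowAbs_inv_rpowAbs hp f).ge)]

def concavification (hp : 0 < p) (hconv : E.pConvex p 1) : Submodule ℝ (Ω →ₘ[μ] ℝ) where
  carrier := {f | cMem E.mem p f}
  zero_mem' := E.cMem_zero hp.ne'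
  add_mem' := E.cMem_add hp hconv
  smul_mem' := E.cMem_smul

end BFL

section PositiveNorming

variable {Ω : Type} [MeasurableSpace Ω] {μ : Measure Ω} (M : Submodule ℝ (Ω →ₘ[μ] ℝ))
  {N : (Ω →ₘ[μ] ℝ) → ℝ}

open AEEqFun

-- Dominating by `z ↦ N (z ⊔ 0)` rather than by `N` is what makes the extension positive.
theorem exists_linearMap_le_sup_zero (hM : ∀ f g, g ∈ M → |f| ≤ |g| → f ∈ M)
    (hN_mono : ∀ f g, g ∈ M → |f| ≤ |g| → N f ≤ N g)
    (hN_smul : ∀ (c : ℝ) f, f ∈ M → N (c • f) = |c| * N f)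
    (hN_add : ∀ f g, f ∈ M → g ∈ M → N (f + g) ≤ N f + N g)
    {g : Ω →ₘ[μ] ℝ} (hg : g ∈ M) (hg0 : 0 ≤ g) :
    ∃ ψ : M →ₗ[ℝ] ℝ, ψ ⟨g, hg⟩ = N g ∧ ∀ z : M, ψ z ≤ N (z ⊔ 0) := by
  have hN_zero : N 0 = 0 := by simpa using hN_smul 0 0 M.zero_mem
  have hN_nonneg : ∀ f ∈ M, 0 ≤ N f := fun f hf => by
    have h := hN_add f ((-1 : ℝ) • f) hf (M.smul_mem _ hf)
    rw [hN_smul (-1) f hf, neg_one_smul, add_neg_cancel, hN_zero, abs_neg, abs_one] at h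
    linarith
  have hpos : ∀ f ∈ M, f ⊔ 0 ∈ M := fun f hf => hM _ _ hf (abs_sup_zero_le f)
  let f₀ := LinearPMap.mkSpanSingleton' (σ := RingHom.id ℝ) (⟨g, hg⟩ : M) (N g) fun c hc => by
    rcases smul_eq_zero.mp hc with rfl | h
    · exact zero_smul _ _
    · rw [show g = 0 from congrArg Subtype.val h, hN_zero, smul_zero]
  obtain ⟨ψ, hψ_ext, hψ_le⟩ := exists_extension_of_le_sublinear f₀ (fun z => N (z ⊔ 0))
    (fun c hc z => by
      simp only [Submodule.coe_smul, smul_sup_zero hc.le, hN_smul c _ (hpos _ z.2),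
        abs_of_pos hc])
    (fun z w => (hN_mono _ _ (M.add_mem (hpos _ z.2) (hpos _ w.2)) (abs_add_sup_zero_le _ _)).trans
      (hN_add _ _ (hpos _ z.2) (hpos _ w.2)))
    (fun ⟨z, hz⟩ => by
      obtain ⟨c, rfl⟩ := Submodule.mem_span_singleton.mp hz
      rw [LinearPMap.mkSpanSingleton'_apply, RingHom.id_apply, smul_eq_mul, Submodule.coe_smul]
      rcases le_or_gt c 0 with hc | hc
      · exact (mul_nonpos_of_nonpos_of_nonneg hc (hN_nonneg g hg)).trans
          (hN_nonneg _ (hpos _ (M.smul_mem c hg)))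
      · rw [smul_sup_zero hc.le, hN_smul c _ (hpos g hg), abs_of_pos hc, sup_eq_left.mpr hg0])
  refine ⟨ψ, ?_, hψ_le⟩
  rw [hψ_ext ⟨⟨g, hg⟩, Submodule.mem_span_singleton_self _⟩]
  exact LinearPMap.mkSpanSingleton'_apply_self _ _ _ _

theorem exists_mem_dualBallPos_apply_eq (hM : ∀ f g, g ∈ M → |f| ≤ |g| → f ∈ M)
    (hN_mono : ∀ f g, g ∈ M → |f| ≤ |g| → N f ≤ N g)
    (hN_smul : ∀ (c : ℝ) f, f ∈ M → N (c • f) = |c| * N f)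
    (hN_add : ∀ f g, f ∈ M → g ∈ M → N (f + g) ≤ N f + N g)
    {g : Ω →ₘ[μ] ℝ} (hg : g ∈ M) (hg0 : 0 ≤ g) :
    ∃ φ ∈ dualBallPos (· ∈ M) N, φ g = N g := by
  classical
  obtain ⟨ψ, hψg, hψ⟩ := exists_linearMap_le_sup_zero M hM hN_mono hN_smul hN_add hg hg0
  have hψ_le (z : M) : ψ z ≤ N z := (hψ z).trans (hN_mono _ _ z.2 (abs_sup_zero_le _))
  refine ⟨fun f => if h : f ∈ M then ψ ⟨f, h⟩ else 0, ⟨?_, ?_, ?_, ?_⟩, by simp [hg, hψg]⟩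
  · intro f f' hf hf'
    simp only [dif_pos hf, dif_pos hf', dif_pos (M.add_mem hf hf')]
    exact map_add ψ ⟨f, hf⟩ ⟨f', hf'⟩
  · intro c f hf
    simp only [dif_pos hf, dif_pos (M.smul_mem c hf)]
    exact map_smul ψ c ⟨f, hf⟩
  · intro f hf hf0
    have h := hψ (-⟨f, hf⟩)
    rw [map_neg, Submodule.coe_neg, neg_sup_zero_of_nonneg hf0,
      show N 0 = 0 by simpa using hN_smul 0 0 M.zero_mem] at h
    simp only [dif_pos hf]
    linarith
  · intro f hf
    have h := hψ_le (-⟨f, hf⟩)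
    rw [map_neg, Submodule.coe_neg, ← neg_one_smul ℝ f, hN_smul _ _ hf, abs_neg, abs_one,
      one_mul] at h
    simp only [dif_pos hf]
    exact abs_le.mpr ⟨by linarith, hψ_le _⟩

end PositiveNorming

theorem apply_sum_smul_of_mem_dualBallPos {Ω : Type} [MeasurableSpace Ω] {μ : Measure Ω}
    {M : Submodule ℝ (Ω →ₘ[μ] ℝ)} {N : (Ω →ₘ[μ] ℝ) → ℝ} {φ : (Ω →ₘ[μ] ℝ) → ℝ}
    (hφ : φ ∈ dualBallPos (· ∈ M) N) {ι : Type*} (s : Finset ι) (c : ι → ℝ)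
    {y : ι → Ω →ₘ[μ] ℝ} (hy : ∀ i, y i ∈ M) :
    φ (∑ i ∈ s, c i • y i) = ∑ i ∈ s, c i * φ (y i) := by
  classical
  induction s using Finset.induction_on with
  | empty => simpa using hφ.2.1 0 0 M.zero_mem
  | insert i s hi ih =>
    rw [Finset.sum_insert hi, Finset.sum_insert hi, hφ.1 _ _ (M.smul_mem _ (hy i))
      (M.sum_mem fun j _ => M.smul_mem _ (hy j)), hφ.2.1 _ _ (hy i), ih]

namespace DualPos

variable {Ω : Type} [MeasurableSpace Ω] {μ : Measure Ω} {mem : (Ω →ₘ[μ] ℝ) → Prop}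
  {nrm : (Ω →ₘ[μ] ℝ) → ℝ} (φ : DualPos mem nrm) {f : Ω →ₘ[μ] ℝ}

theorem app_nonneg (hf : mem f) (hf0 : 0 ≤ f) : 0 ≤ φ.app f :=
  φ.2.2.2.1 f hf hf0

theorem app_le (hf : mem f) : φ.app f ≤ nrm f :=
  (le_abs_self _).trans (φ.2.2.2.2 f hf)

end DualPos

namespace BFL

variable {Ω : Type} [MeasurableSpace Ω] {μ : Measure Ω} (E : BFL Ω μ) {p : ℝ}

theorem exists_dualPos_app_eq_cNrm (hp : 0 < p) (hconv : E.pConvex p 1) {g : Ω →ₘ[μ] ℝ}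
    (hg : cMem E.mem p g) (hg0 : 0 ≤ g) :
    ∃ φ : DualPos (cMem E.mem p) (cNrm E.nrm p), φ.app g = cNrm E.nrm p g := by
  obtain ⟨φ, hφ, hφg⟩ := exists_mem_dualBallPos_apply_eq (E.concavification hp hconv)
    (fun _ _ => E.cMem_of_abs_le hp.le) (fun _ _ => E.cNrm_le_of_abs_le hp.le)
    (fun c _ => E.cNrm_smul hp.ne' c) (fun _ _ => E.cNrm_add_le hp hconv) hg hg0
  exact ⟨⟨φ, hφ⟩, hφg⟩

theorem dualPos_app_rpowAbs_pSum_smul (hp : 0 < p) (hconv : E.pConvex p 1) {n : ℕ}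
    {x : Fin n → (Ω →ₘ[μ] ℝ)} (hx : ∀ k, E.mem (x k))
    (φ : DualPos (cMem E.mem p) (cNrm E.nrm p)) (β : Fin n → ℝ) :
    φ.app (rpowAbs p (pSum p fun k => β k • x k)) = ∑ k, |β k| ^ p * φ.app (rpowAbs p (x k)) := by
  rw [rpowAbs_pSum_smul hp.ne']
  exact apply_sum_smul_of_mem_dualBallPos (M := E.concavification hp hconv) φ.2 _ _
    fun k => E.cMem_rpowAbs hp.ne' (hx k)

theorem exists_dualPos_nrm_pSum_smul_eq (hp : 0 < p) (hconv : E.pConvex p 1) {n : ℕ}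
    {x : Fin n → (Ω →ₘ[μ] ℝ)} (hx : ∀ k, E.mem (x k)) (β : Fin n → ℝ) :
    ∃ φ : DualPos (cMem E.mem p) (cNrm E.nrm p),
      E.nrm (pSum p fun k => β k • x k) = (∑ k, |β k| ^ p * φ.app (rpowAbs p (x k))) ^ p⁻¹ := by
  have hy := (hconv n _ fun k => E.smul_mem (β k) _ (hx k)).1
  obtain ⟨φ, hφ⟩ := E.exists_dualPos_app_eq_cNrm hp hconv (E.cMem_rpowAbs hp.ne' hy)
    (rpowAbs_nonneg p _)
  refine ⟨φ, ?_⟩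
  rw [← E.dualPos_app_rpowAbs_pSum_smul hp hconv hx, hφ, E.cNrm_rpowAbs hp.ne' hy,
    Real.rpow_rpow_inv (E.nrm_nonneg _) hp.ne']

theorem sum_mul_dualPos_app_le_nrm_pSum_smul (hp : 0 < p) (hconv : E.pConvex p 1) {n : ℕ}
    {x : Fin n → (Ω →ₘ[μ] ℝ)} (hx : ∀ k, E.mem (x k))
    (φ : DualPos (cMem E.mem p) (cNrm E.nrm p)) (β : Fin n → ℝ) :
    (∑ k, |β k| ^ p * φ.app (rpowAbs p (x k))) ^ p⁻¹ ≤ E.nrm (pSum p fun k => β k • x k) := by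
  have hy := (hconv n _ fun k => E.smul_mem (β k) _ (hx k)).1
  have hmem := E.cMem_rpowAbs hp.ne' hy
  rw [← E.dualPos_app_rpowAbs_pSum_smul hp hconv hx,
    ← Real.rpow_rpow_inv (E.nrm_nonneg (pSum p _)) hp.ne', ← E.cNrm_rpowAbs hp.ne' hy]
  exact Real.rpow_le_rpow (φ.app_nonneg hmem (rpowAbs_nonneg p _)) (φ.app_le hmem)
    (inv_nonneg.mpr hp.le)

end BFL

theorem statement3_general {Ω : Type} [MeasurableSpace Ω] (μ : Measure Ω)
    (E : BFL Ω μ) (p q : ℝ) (hp : 1 ≤ p) (hpq : p ≤ q)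
    (hconv : E.pConvex p 1) {n : ℕ} (x : Fin n → (Ω →ₘ[μ] ℝ)) (hx : ∀ k, E.mem (x k)) :
    strongSup E.nrm p q x =
      ⨆ φ : DualPos (cMem E.mem p) (cNrm E.nrm p),
        (∑ k, (DualPos.app φ (rpowAbs p (x k))) ^ (q / p)) ^ q⁻¹ := by
  have hp₀ : 0 < p := zero_lt_one.trans_le hp
  have hq₀ : 0 < q := hp₀.trans_le hpq
  have hF k : cMem E.mem p (rpowAbs p (x k)) := E.cMem_rpowAbs hp₀.ne' (hx k)
  have hφF (φ : DualPos (cMem E.mem p) (cNrm E.nrm p)) k : 0 ≤ φ.app (rpowAbs p (x k)) :=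
    φ.app_nonneg (hF k) (rpowAbs_nonneg p _)
  have hduality φ := isGreatest_rpow_inv_sum_rpow_mul_strongBall hp₀ hpq (hφF φ)
  refine ciSup_eq_ciSup_of_forall_exists_le ?_ (fun β => ?_) (fun φ => ?_)
  · refine ⟨(∑ k, cNrm E.nrm p (rpowAbs p (x k)) ^ (q / p)) ^ q⁻¹, ?_⟩
    rintro _ ⟨φ, rfl⟩
    exact Real.rpow_le_rpow (Finset.sum_nonneg fun k _ => Real.rpow_nonneg (hφF φ k) _)
      (Finset.sum_le_sum fun k _ => Real.rpow_le_rpow (hφF φ k) (φ.app_le (hF k)) (by positivity))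
      (by positivity)
  · obtain ⟨φ, hφ⟩ := E.exists_dualPos_nrm_pSum_smul_eq hp₀ hconv hx β.1
    exact ⟨φ, hφ ▸ (hduality φ).2 ⟨β.1, β.2, rfl⟩⟩
  · obtain ⟨β, hβ, hβφ⟩ := (hduality φ).1
    exact ⟨⟨β, hβ⟩, hβφ ▸ E.sum_mul_dualPos_app_le_nrm_pSum_smul hp₀ hconv hx φ β⟩

/-- Lemma `lemaequi1`: in a `p`-convex Banach function lattice `E` with
convexity constant 1, for `1 ≤ p ≤ q` and `1/r = 1/p - 1/q`,
`sup_{β ∈ B_r^n} ‖(∑ |βₖ xₖ|^p)^{1/p}‖_E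
  = sup_{x* ∈ B⁺_{(E_p)*}} (∑ ⟨|xₖ|^p, x*⟩^{q/p})^{1/q}`. -/
theorem statement3 {Ω : Type} [MeasurableSpace Ω] (μ : Measure Ω) [SigmaFinite μ]
    (E : BFL Ω μ) (p q : ℝ) (hp : 1 ≤ p) (hpq : p ≤ q)
    (hconv : E.pConvex p 1) {n : ℕ} (x : Fin n → (Ω →ₘ[μ] ℝ)) (hx : ∀ k, E.mem (x k)) :
    strongSup E.nrm p q x =
      ⨆ φ : DualPos (cMem E.mem p) (cNrm E.nrm p),
        (∑ k, (DualPos.app φ (rpowAbs p (x k))) ^ (q / p)) ^ q⁻¹ :=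
  statement3_general μ E p q hp hpq hconv x hx

end
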